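/- The right-sided Riemann–Liouville q-fractional integral operator satisfies the semigroup property: I^α_{q,b^-} I^β_{q,b^-} f(x) = I^{α+β}_{q,b^-} f(x) for all x ∈ A*_{q,b}, for any function f defined on A_{q,b} and any α, β > 0. -/

import Mathlib

open Filter

noncomputable section

namespace QFrac

variable (q : ℝ)

/-- infinite q-shifted factorial `(z;q)_∞` -/
def pochInf (z : ℝ) : ℝ := ∏' n : ℕ, (1 - z * q ^ n)

/-- generalized q-shifted factorial `(z;q)_ν = (z;q)_∞ / (z q^ν;q)_∞` -/
def poch (z ν : ℝ) : ℝ := pochInf q z / pochInf q (z * q ^ ν)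

/-- finite q-shifted factorial `(z;q)_k` -/
def pochN (z : ℝ) (k : ℕ) : ℝ := ∏ i ∈ Finset.range k, (1 - z * q ^ i)

/-- q-Gamma function -/
def qGamma (α : ℝ) : ℝ := pochInf q q / pochInf q (q ^ α) * (1 - q) ^ (1 - α)

/-- Jackson q-integral `∫_0^a f(t) d_q t` -/
def jackson (a : ℝ) (f : ℝ → ℝ) : ℝ := (1 - q) * a * ∑' n : ℕ, q ^ n * f (a * q ^ n)

/-- Jackson q-integral `∫_c^b f(t) d_q t` -/
def jacksonI (c b : ℝ) (f : ℝ → ℝ) : ℝ := jackson q b f - jackson q c f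

/-- left-sided Riemann–Liouville q-fractional integral `I^α_{q,0^+}` -/
def Ileft (α : ℝ) (f : ℝ → ℝ) (x : ℝ) : ℝ :=
  x ^ (α - 1) / qGamma q α * jackson q x (fun t => poch q (q * t / x) (α - 1) * f t)

/-- right-sided Riemann–Liouville q-fractional integral `I^α_{q,b^-}` -/
def Iright (b α : ℝ) (f : ℝ → ℝ) (x : ℝ) : ℝ :=
  (qGamma q α)⁻¹ *
    jacksonI q (q * x) b (fun t => t ^ (α - 1) * poch q (q * x / t) (α - 1) * f t)

/-- Jackson q-derivative -/
def Dq (f : ℝ → ℝ) (x : ℝ) : ℝ := (f x - f (q * x)) / ((1 - q) * x)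

/-- Jackson `q⁻¹`-derivative -/
def Dqinv (f : ℝ → ℝ) (x : ℝ) : ℝ := (f x - f (x / q)) / ((1 - q⁻¹) * x)

/-- left-sided Caputo q-fractional derivative of order `α ∈ (0,1)` -/
def CDleft (α : ℝ) (f : ℝ → ℝ) : ℝ → ℝ := Ileft q (1 - α) (Dq q f)

/-- left-sided Riemann–Liouville q-fractional derivative of order `α ∈ (0,1)` -/
def DRLleft (α : ℝ) (f : ℝ → ℝ) : ℝ → ℝ := Dq q (Ileft q (1 - α) f)

/-- right-sided Riemann–Liouville q-fractional derivative of order `α ∈ (0,1)` -/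
def DRLright (b α : ℝ) (f : ℝ → ℝ) (x : ℝ) : ℝ :=
  (-1 / q) * Dqinv q (fun t => Iright q b (1 - α) f t) x

/-- right-sided Caputo q-fractional derivative of order `α ∈ (0,1)` -/
def CDright (b α : ℝ) (f : ℝ → ℝ) (x : ℝ) : ℝ :=
  (-1 / q) * Iright q b (1 - α) (Dqinv q f) x

/-- `f ∈ L¹_q(A^*_{q,a})` -/
def MemL1 (a : ℝ) (f : ℝ → ℝ) : Prop := Summable (fun n : ℕ => q ^ n * |f (a * q ^ n)|)

/-- `f ∈ L²_q(A^*_{q,a})` -/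
def MemL2 (a : ℝ) (f : ℝ → ℝ) : Prop := Summable (fun n : ℕ => q ^ n * (f (a * q ^ n)) ^ 2)

/-- the `L²_q` norm -/
def norm2 (a : ℝ) (f : ℝ → ℝ) : ℝ := Real.sqrt (jackson q a (fun t => (f t) ^ 2))

/-- `f` is q-regular at zero (its value at `0` is the limit along the q-grid) -/
def qRegular (a : ℝ) (f : ℝ → ℝ) : Prop :=
  Tendsto (fun n : ℕ => f (a * q ^ n)) atTop (nhds (f 0))

/-- the limit at zero along the q-grid exists -/
def qRegular' (a : ℝ) (f : ℝ → ℝ) : Prop :=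
  ∃ L : ℝ, Tendsto (fun n : ℕ => f (a * q ^ n)) atTop (nhds L)

/-- sup norm on `A^*_{q,a}` -/
def supNorm (a : ℝ) (f : ℝ → ℝ) : ℝ := max (⨆ n : ℕ, |f (a * q ^ n)|) |f 0|

/-- bounded q-variation part of q-absolute continuity -/
def qACvar (a : ℝ) (f : ℝ → ℝ) : Prop :=
  ∃ K : ℝ, ∀ m N : ℕ,
    ∑ j ∈ Finset.range N, |f (a * q ^ (m + j)) - f (a * q ^ (m + j + 1))| ≤ K

/-- q-absolute continuity on `A^*_{q,a}` -/
def qAC (a : ℝ) (f : ℝ → ℝ) : Prop := qRegular q a f ∧ qACvar q a f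

/-- little q-Jacobi polynomial `p_n(x; q^A, q^B | q)` -/
def littleJacobi (n : ℕ) (A B x : ℝ) : ℝ :=
  ∑ k ∈ Finset.range (n + 1),
    pochN q (q ^ (-(n : ℝ))) k * pochN q (q ^ (A + B + (n : ℝ) + 1)) k /
      (pochN q (q ^ (A + 1)) k * pochN q q k) * (q * x) ^ k

end QFrac

/-!
On the grid `b q^m` the kernel `(q^{m+1-n};q)_{γ-1}` vanishes for `n > m`, and for `n ≤ m` it is
a constant times `(q^γ;q)_{m-n} / (q;q)_{m-n}`. Encoding the weighted samples `(q^γ)^n g(b q^n)`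
as a power series `U`, the value `I^γ g(b q^m)` becomes `((1-q) b)^γ` times the `m`-th
coefficient of `S_{q^γ} · U`, where `S_z = ∑ (z;q)_k / (q;q)_k X^k`. The semigroup law on the
grid is then Cauchy's identity `S_a(X) S_c(aX) = S_{ac}(X)`, which follows from the functional
equation `(1 - X) S_z(X) = (1 - zX) S_z(qX)`, since that equation determines `S_z`.

At `x = 0` the integrals are full Jackson sums, and the semigroup law becomes a Cauchy product,
evaluated with the q-binomial theorem `∑ (c;q)_k / (q;q)_k a^k = (ac;q)_∞ / (a;q)_∞`.
-/

open Finset Filter Topology PowerSeries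

lemma tendsto_sum_antidiagonal_mul_of_tendsto {b u : ℕ → ℝ} {L : ℝ}
    (hb : Summable fun k => ‖b k‖) (hu : Tendsto u atTop (𝓝 L)) :
    Tendsto (fun n => ∑ kl ∈ antidiagonal n, b kl.1 * u kl.2) atTop
      (𝓝 ((∑' k, b k) * L)) := by
  obtain ⟨M, hM⟩ := hu.norm.bddAbove_range
  have hbound (n : ℕ) : ‖u n‖ ≤ M := hM ⟨n, rfl⟩
  set F : ℕ → ℕ → ℝ := fun n k => if k ≤ n then b k * u (n - k) else 0
  have hF (n : ℕ) : ∑ kl ∈ antidiagonal n, b kl.1 * u kl.2 = ∑' k, F n k := by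
    rw [Nat.sum_antidiagonal_eq_sum_range_succ (fun i j => b i * u j),
      tsum_eq_sum (s := range (n + 1))]
    · exact sum_congr rfl fun k hk => (if_pos (Nat.lt_succ_iff.1 (mem_range.1 hk))).symm
    · intro k hk
      exact if_neg (by simpa [Nat.lt_succ_iff] using hk)
  simp_rw [hF, ← tsum_mul_right]
  refine tendsto_tsum_of_dominated_convergence (hb.mul_right M) (fun k => ?_) ?_
  · refine ((hu.comp (tendsto_sub_atTop_nat k)).const_mul (b k)).congr' ?_
    filter_upwards [eventually_ge_atTop k] with n hn
    exact (if_pos hn).symm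
  · refine Eventually.of_forall fun n k => ?_
    simp only [F]
    split_ifs
    · rw [norm_mul]
      exact mul_le_mul_of_nonneg_left (hbound _) (norm_nonneg _)
    · simpa using mul_nonneg (norm_nonneg (b k)) ((norm_nonneg _).trans (hbound 0))

lemma PowerSeries.tsum_coeff_mul_of_mul_eq_one {φ χ : ℝ⟦X⟧}
    (hφ : Summable fun n => ‖coeff n φ‖) (hχ : Summable fun n => ‖coeff n χ‖)
    (hχφ : χ * φ = 1) (ψ : ℝ⟦X⟧) :
    ∑' n, coeff n (φ * ψ) = (∑' n, coeff n φ) * ∑' n, coeff n ψ := by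
  -- `ψ = χ * (φ * ψ)`, so `φ * ψ` is summable only if `ψ` is; otherwise both sides are `0`.
  by_cases hψ : Summable fun n => coeff n ψ
  · simp only [coeff_mul]
    exact (tsum_mul_tsum_eq_tsum_sum_antidiagonal_of_summable_norm hφ hψ.norm).symm
  · have hφψ : ¬ Summable fun n => coeff n (φ * ψ) := fun h => hψ <| by
      have := (summable_norm_sum_mul_antidiagonal_of_summable_norm hχ h.norm).of_norm
      simpa only [← coeff_mul, ← mul_assoc, hχφ, one_mul] using this
    rw [tsum_eq_zero_of_not_summable hφψ, tsum_eq_zero_of_not_summable hψ, mul_zero]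

namespace QFrac

variable {q : ℝ}

lemma hasProd_pochInf (hq0 : 0 ≤ q) (hq1 : q < 1) (z : ℝ) :
    HasProd (fun n : ℕ => 1 - z * q ^ n) (pochInf q z) := by
  have h := (Real.multipliable_one_add_of_summable
    ((summable_geometric_of_lt_one hq0 hq1).mul_left z).neg).hasProd
  simp only [← sub_eq_add_neg] at h
  exact h

lemma tendsto_pochN (hq0 : 0 ≤ q) (hq1 : q < 1) (z : ℝ) :
    Tendsto (pochN q z) atTop (𝓝 (pochInf q z)) :=
  (hasProd_pochInf hq0 hq1 z).tendsto_prod_nat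

lemma pochN_add (z : ℝ) (k n : ℕ) :
    pochN q z (k + n) = pochN q z k * pochN q (z * q ^ k) n := by
  simp only [pochN, prod_range_add, pow_add, mul_assoc]

lemma pochInf_eq_pochN_mul (hq0 : 0 ≤ q) (hq1 : q < 1) (z : ℝ) (k : ℕ) :
    pochInf q z = pochN q z k * pochInf q (z * q ^ k) := by
  have h := (tendsto_add_atTop_iff_nat k).2 (tendsto_pochN hq0 hq1 z)
  simp only [add_comm _ k, pochN_add] at h
  exact tendsto_nhds_unique h ((tendsto_pochN hq0 hq1 _).const_mul _)

lemma one_sub_mul_pow_pos (hq0 : 0 ≤ q) (hq1 : q ≤ 1) {z : ℝ} (hz : z < 1) (n : ℕ) :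
    0 < 1 - z * q ^ n := by
  have h0 := pow_nonneg hq0 n
  have h1 := pow_le_one₀ hq0 hq1 (n := n)
  rcases le_or_gt z 0 with h | h <;> nlinarith

lemma pochN_pos (hq0 : 0 ≤ q) (hq1 : q ≤ 1) {z : ℝ} (hz : z < 1) (k : ℕ) :
    0 < pochN q z k :=
  prod_pos fun n _ => one_sub_mul_pow_pos hq0 hq1 hz n

lemma pochInf_pos (hq0 : 0 ≤ q) (hq1 : q < 1) {z : ℝ} (hz : z < 1) : 0 < pochInf q z := by
  have hne : pochInf q z ≠ 0 := by
    have h := tprod_one_add_ne_zero_of_summable (f := fun n : ℕ => -(z * q ^ n))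
      (fun n => by simpa [← sub_eq_add_neg] using (one_sub_mul_pow_pos hq0 hq1.le hz n).ne')
      ((summable_geometric_of_lt_one hq0 hq1).mul_left z).neg.norm
    simp only [← sub_eq_add_neg] at h
    exact h
  exact hne.symm.lt_of_le <|
    ge_of_tendsto' (tendsto_pochN hq0 hq1 z) fun k => (pochN_pos hq0 hq1.le hz k).le

lemma pochInf_eq_zero {z : ℝ} (j : ℕ) (h : z * q ^ j = 1) : pochInf q z = 0 :=
  tprod_of_exists_eq_zero ⟨j, by rw [h, sub_self]⟩

lemma pochInf_zero : pochInf q 0 = 1 := by simp [pochInf]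

lemma pochInf_le_pochN (hq0 : 0 ≤ q) (hq1 : q < 1) {z : ℝ} (hz0 : 0 ≤ z) (hz1 : z < 1)
    (k : ℕ) : pochInf q z ≤ pochN q z k := by
  refine Antitone.le_of_tendsto (antitone_nat_of_succ_le fun n => ?_) (tendsto_pochN hq0 hq1 z) k
  rw [pochN, prod_range_succ]
  exact mul_le_of_le_one_right (pochN_pos hq0 hq1.le hz1 n).le
    (sub_le_self _ (mul_nonneg hz0 (pow_nonneg hq0 n)))

lemma abs_pochN_le (hq0 : 0 ≤ q) (hq1 : q < 1) (z : ℝ) (k : ℕ) :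
    |pochN q z k| ≤ Real.exp (|z| / (1 - q)) := by
  have hgeom : ∑ i ∈ range k, q ^ i ≤ (1 - q)⁻¹ :=
    tsum_geometric_of_lt_one hq0 hq1 ▸
      (summable_geometric_of_lt_one hq0 hq1).sum_le_tsum _ fun i _ => pow_nonneg hq0 i
  calc |pochN q z k| = ∏ i ∈ range k, |1 - z * q ^ i| := abs_prod _ _
    _ ≤ ∏ i ∈ range k, Real.exp (|z| * q ^ i) := by
        refine prod_le_prod (fun i _ => abs_nonneg _) fun i _ => ?_
        calc |1 - z * q ^ i| ≤ |z| * q ^ i + 1 := by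
              simpa [abs_mul, abs_of_nonneg (pow_nonneg hq0 i), add_comm] using
                abs_sub (1 : ℝ) (z * q ^ i)
          _ ≤ Real.exp (|z| * q ^ i) := Real.add_one_le_exp _
    _ = Real.exp (|z| * ∑ i ∈ range k, q ^ i) := by rw [← Real.exp_sum, mul_sum]
    _ ≤ Real.exp (|z| / (1 - q)) := by
        gcongr
        rw [div_eq_mul_inv]
        exact mul_le_mul_of_nonneg_left hgeom (abs_nonneg z)

/-- Formally `(zX;q)_∞ / (X;q)_∞`, by the q-binomial theorem. -/
def qBinomialSeries (q z : ℝ) : ℝ⟦X⟧ := PowerSeries.mk fun k => pochN q z k / pochN q q k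

lemma one_sub_X_mul_eq_iff (q z : ℝ) (F : ℝ⟦X⟧) :
    (1 - X) * F = (1 - C z * X) * rescale q F ↔
      ∀ n, (1 - q ^ (n + 1)) * coeff (n + 1) F = (1 - z * q ^ n) * coeff n F := by
  have hX (G : ℝ⟦X⟧) (n : ℕ) :
      coeff (n + 1) ((1 - X) * G) = coeff (n + 1) G - coeff n G := by
    simp [sub_mul, coeff_succ_X_mul]
  have hCX (G : ℝ⟦X⟧) (n : ℕ) :
      coeff (n + 1) ((1 - C z * X) * G) = coeff (n + 1) G - z * coeff n G := by
    simp [sub_mul, mul_assoc, coeff_succ_X_mul]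
  constructor
  · intro h n
    have := congrArg (coeff (n + 1)) h
    rw [hX, hCX, coeff_rescale, coeff_rescale] at this
    linear_combination this
  · intro h
    ext (_ | n)
    · have h0 := coeff_rescale F q 0
      rw [pow_zero, one_mul] at h0
      simp only [sub_mul, one_mul, map_sub, mul_assoc, coeff_zero_X_mul, coeff_C_mul, mul_zero, h0]
    · rw [hX, hCX, coeff_rescale, coeff_rescale]
      linear_combination h n

lemma qBinomialSeries_rec (hq0 : 0 ≤ q) (hq1 : q < 1) (z : ℝ) (n : ℕ) :
    (1 - q ^ (n + 1)) * coeff (n + 1) (qBinomialSeries q z) =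
      (1 - z * q ^ n) * coeff n (qBinomialSeries q z) := by
  have hqn := (one_sub_mul_pow_pos hq0 hq1.le hq1 n).ne'
  have hpos := (pochN_pos hq0 hq1.le hq1 n).ne'
  simp only [qBinomialSeries, coeff_mk, pochN, prod_range_succ, pow_succ'] at hqn hpos ⊢
  field_simp

lemma eq_qBinomialSeries_of_rec (hq0 : 0 ≤ q) (hq1 : q < 1) {z : ℝ} {F : ℝ⟦X⟧}
    (hF : ∀ n, (1 - q ^ (n + 1)) * coeff (n + 1) F = (1 - z * q ^ n) * coeff n F)
    (h0 : coeff 0 F = 1) : F = qBinomialSeries q z := by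
  ext n
  induction n with
  | zero => simp [qBinomialSeries, h0, pochN]
  | succ n ih =>
    have hqn : 1 - q ^ (n + 1) ≠ 0 := by
      simpa [pow_succ'] using (one_sub_mul_pow_pos hq0 hq1.le hq1 n).ne'
    exact mul_left_cancel₀ hqn <| by rw [hF, ih, qBinomialSeries_rec hq0 hq1]

lemma rescale_one_sub_C_mul_X (a c : ℝ) :
    rescale a (1 - C c * X) = 1 - C (a * c) * X := by
  have hC : rescale a (C c) = C c := by
    ext (_ | n) <;> simp [coeff_rescale, coeff_C]
  rw [map_sub, map_one, map_mul, hC, rescale_X, map_mul]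
  ring

/-- Formally `(aX)_∞/(X)_∞ · (acX)_∞/(aX)_∞ = (acX)_∞/(X)_∞`. -/
theorem qBinomialSeries_mul_rescale (hq0 : 0 ≤ q) (hq1 : q < 1) (a c : ℝ) :
    qBinomialSeries q a * rescale a (qBinomialSeries q c) = qBinomialSeries q (a * c) := by
  have ha := (one_sub_X_mul_eq_iff q a _).2 (qBinomialSeries_rec hq0 hq1 a)
  have hc := (one_sub_X_mul_eq_iff q c _).2 (qBinomialSeries_rec hq0 hq1 c)
  set Sa := qBinomialSeries q a
  set Sc := qBinomialSeries q c
  refine eq_qBinomialSeries_of_rec hq0 hq1 ((one_sub_X_mul_eq_iff q _ _).1 ?_) ?_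
  · calc (1 - X) * (Sa * rescale a Sc)
        = rescale q Sa * ((1 - C a * X) * rescale a Sc) := by rw [← mul_assoc, ha]; ring
      _ = rescale q Sa * rescale a ((1 - X) * Sc) := by
          rw [map_mul, map_sub, map_one, rescale_X]
      _ = (1 - C (a * c) * X) * rescale q (Sa * rescale a Sc) := by
          rw [hc, map_mul (rescale a), map_mul (rescale q), rescale_one_sub_C_mul_X,
            rescale_rescale, rescale_rescale, mul_comm q a]
          ring
  · rw [coeff_mul]
    simp [Sa, Sc, qBinomialSeries, pochN, coeff_rescale]

lemma qBinomialSeries_one : qBinomialSeries q 1 = 1 := by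
  ext (_ | n)
  · simp [qBinomialSeries, pochN]
  · simp [qBinomialSeries, pochN, prod_range_succ']

lemma abs_coeff_qBinomialSeries_le (hq0 : 0 ≤ q) (hq1 : q < 1) (z : ℝ) (k : ℕ) :
    |coeff k (qBinomialSeries q z)| ≤ Real.exp (|z| / (1 - q)) / pochInf q q := by
  rw [qBinomialSeries, coeff_mk, abs_div, abs_of_pos (pochN_pos hq0 hq1.le hq1 k)]
  exact div_le_div₀ (Real.exp_pos _).le (abs_pochN_le hq0 hq1 z k)
    (pochInf_pos hq0 hq1 hq1) (pochInf_le_pochN hq0 hq1 hq0 hq1 k)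

lemma tendsto_coeff_qBinomialSeries (hq0 : 0 ≤ q) (hq1 : q < 1) (z : ℝ) :
    Tendsto (fun k => coeff k (qBinomialSeries q z)) atTop (𝓝 (pochInf q z / pochInf q q)) := by
  simp only [qBinomialSeries, coeff_mk]
  exact (tendsto_pochN hq0 hq1 z).div (tendsto_pochN hq0 hq1 q) (pochInf_pos hq0 hq1 hq1).ne'

lemma summable_norm_coeff_rescale_qBinomialSeries (hq0 : 0 ≤ q) (hq1 : q < 1) {a : ℝ}
    (ha : |a| < 1) (z : ℝ) :
    Summable fun k => ‖coeff k (rescale a (qBinomialSeries q z))‖ := by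
  refine Summable.of_nonneg_of_le (fun k => norm_nonneg _) (fun k => ?_)
    ((summable_geometric_of_lt_one (abs_nonneg a) ha).mul_right
      (Real.exp (|z| / (1 - q)) / pochInf q q))
  rw [coeff_rescale, Real.norm_eq_abs, abs_mul, abs_pow]
  exact mul_le_mul_of_nonneg_left (abs_coeff_qBinomialSeries_le hq0 hq1 z k)
    (pow_nonneg (abs_nonneg a) k)

/-- The q-binomial theorem, obtained by letting `n → ∞` in the `n`-th coefficient of
`qBinomialSeries_mul_rescale`. -/
theorem tsum_coeff_rescale_qBinomialSeries (hq0 : 0 ≤ q) (hq1 : q < 1) {a : ℝ} (ha : |a| < 1)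
    (c : ℝ) :
    ∑' k, coeff k (rescale a (qBinomialSeries q c)) = pochInf q (a * c) / pochInf q a := by
  have hlim := tendsto_sum_antidiagonal_mul_of_tendsto
    (summable_norm_coeff_rescale_qBinomialSeries hq0 hq1 ha c)
    (tendsto_coeff_qBinomialSeries hq0 hq1 a)
  simp only [← coeff_mul, mul_comm (rescale a _), qBinomialSeries_mul_rescale hq0 hq1] at hlim
  have h := tendsto_nhds_unique (tendsto_coeff_qBinomialSeries hq0 hq1 (a * c)) hlim
  have hPq := (pochInf_pos hq0 hq1 hq1).ne'
  have hPa := (pochInf_pos hq0 hq1 (abs_lt.1 ha).2).ne'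
  field_simp at h ⊢
  linarith

lemma rescale_qBinomialSeries_inv_mul (hq0 : 0 ≤ q) (hq1 : q < 1) (a : ℝ) {c : ℝ}
    (hc : c ≠ 0) :
    rescale (a * c) (qBinomialSeries q c⁻¹) * rescale a (qBinomialSeries q c) = 1 := by
  have hshift : rescale a (qBinomialSeries q c) =
      rescale (a * c) (rescale c⁻¹ (qBinomialSeries q c)) := by
    rw [rescale_rescale, mul_comm a c, inv_mul_cancel_left₀ hc]
  rw [hshift, ← map_mul, qBinomialSeries_mul_rescale hq0 hq1, inv_mul_cancel₀ hc,
    qBinomialSeries_one, map_one]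

lemma poch_pow_succ (hq0 : 0 < q) (hq1 : q < 1) {γ : ℝ} (hγ : 0 < γ) (k : ℕ) :
    poch q (q ^ (k + 1)) (γ - 1) =
      coeff k (qBinomialSeries q (q ^ γ)) * (pochInf q q / pochInf q (q ^ γ)) := by
  have hγ0 : 0 ≤ q ^ γ := Real.rpow_nonneg hq0.le γ
  have hγ1 : q ^ γ < 1 := Real.rpow_lt_one hq0.le hq1 hγ
  have hexp : q ^ (k + 1) * q ^ (γ - 1) = q ^ γ * q ^ k := by
    rw [← Real.rpow_natCast, ← Real.rpow_natCast q k, ← Real.rpow_add hq0,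
      ← Real.rpow_add hq0]
    push_cast
    ring_nf
  have hPq := (pochN_pos hq0.le hq1.le hq1 k).ne'
  have hPγ := (pochN_pos hq0.le hq1.le hγ1 k).ne'
  have hPγk := (pochInf_pos hq0.le hq1
    ((mul_le_of_le_one_right hγ0 (pow_le_one₀ (n := k) hq0.le hq1.le)).trans_lt hγ1)).ne'
  rw [poch, hexp, qBinomialSeries, coeff_mk, pochInf_eq_pochN_mul hq0.le hq1 q k,
    pochInf_eq_pochN_mul hq0.le hq1 (q ^ γ) k, ← pow_succ']
  field_simp

lemma poch_grid_of_lt (hq : q ≠ 0) {b : ℝ} (hb : b ≠ 0) {m n : ℕ} (h : m < n) (ν : ℝ) :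
    poch q (q * (b * q ^ m) / (b * q ^ n)) ν = 0 := by
  obtain ⟨d, rfl⟩ := Nat.exists_eq_add_of_lt h
  rw [poch, pochInf_eq_zero d, zero_div]
  field_simp
  ring

lemma poch_grid_of_le (hq : q ≠ 0) {b : ℝ} (hb : b ≠ 0) {m n : ℕ} (h : n ≤ m) (ν : ℝ) :
    poch q (q * (b * q ^ m) / (b * q ^ n)) ν = poch q (q ^ (m - n + 1)) ν := by
  obtain ⟨d, rfl⟩ := Nat.exists_eq_add_of_le h
  rw [Nat.add_sub_cancel_left]
  congr 1
  field_simp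
  ring

lemma pow_mul_mul_pow_rpow_sub_one (hq : 0 < q) {b : ℝ} (hb : 0 < b) (γ : ℝ) (n : ℕ) :
    q ^ n * (b * q ^ n) ^ (γ - 1) = b ^ (γ - 1) * (q ^ γ) ^ n := by
  rw [Real.mul_rpow hb.le (pow_nonneg hq.le n), Real.rpow_sub_one hb.ne',
    Real.rpow_sub_one (pow_pos hq n).ne', Real.rpow_pow_comm hq.le]
  field_simp

lemma qGamma_inv_mul_eq (hq1 : q < 1) {b : ℝ} (hb : 0 < b) (γ : ℝ) :
    (qGamma q γ)⁻¹ * ((1 - q) * b * b ^ (γ - 1)) =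
      ((1 - q) * b) ^ γ * (pochInf q (q ^ γ) / pochInf q q) := by
  have h1q : 0 < 1 - q := sub_pos.2 hq1
  rw [qGamma, Real.mul_rpow h1q.le hb.le, Real.rpow_sub_one hb.ne', Real.rpow_sub h1q,
    Real.rpow_one]
  field_simp

def sampleSeries (q b γ : ℝ) (g : ℝ → ℝ) : ℝ⟦X⟧ :=
  PowerSeries.mk fun n => (q ^ γ) ^ n * g (b * q ^ n)

lemma rescale_sampleSeries (hq : 0 < q) (b α β : ℝ) (g : ℝ → ℝ) :
    rescale (q ^ α) (sampleSeries q b β g) = sampleSeries q b (α + β) g := by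
  ext n
  simp only [sampleSeries, coeff_rescale, coeff_mk, Real.rpow_add hq, mul_pow]
  ring

lemma Iright_grid (hq0 : 0 < q) (hq1 : q < 1) {b : ℝ} (hb : 0 < b) {γ : ℝ} (hγ : 0 < γ)
    (g : ℝ → ℝ) (m : ℕ) :
    Iright q b γ g (b * q ^ m) =
      ((1 - q) * b) ^ γ * coeff m (qBinomialSeries q (q ^ γ) * sampleSeries q b γ g) := by
  set T : ℝ → ℝ := fun t => t ^ (γ - 1) * poch q (q * (b * q ^ m) / t) (γ - 1) * g t
  have hlow : jackson q (q * (b * q ^ m)) T = 0 := by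
    have hzero (n : ℕ) : q ^ n * T (q * (b * q ^ m) * q ^ n) = 0 := by
      simp only [T]
      rw [show q * (b * q ^ m) * q ^ n = b * q ^ (m + 1 + n) by ring,
        poch_grid_of_lt hq0.ne' hb.ne' (by omega), mul_zero, zero_mul, mul_zero]
    simp [jackson, hzero]
  have hup : jackson q b T = (1 - q) * b * ∑ n ∈ range (m + 1), q ^ n * T (b * q ^ n) := by
    rw [jackson, tsum_eq_sum]
    intro n hn
    simp only [T]
    rw [poch_grid_of_lt hq0.ne' hb.ne' (by simpa using hn), mul_zero, zero_mul, mul_zero]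
  have hterm (n : ℕ) (hn : n ∈ range (m + 1)) : q ^ n * T (b * q ^ n) =
      b ^ (γ - 1) * (pochInf q q / pochInf q (q ^ γ)) *
        (coeff n (sampleSeries q b γ g) * coeff (m - n) (qBinomialSeries q (q ^ γ))) := by
    simp only [T]
    rw [poch_grid_of_le hq0.ne' hb.ne' (Nat.lt_succ_iff.1 (mem_range.1 hn)),
      poch_pow_succ hq0 hq1 hγ, ← mul_assoc, ← mul_assoc, pow_mul_mul_pow_rpow_sub_one hq0 hb,
      sampleSeries, coeff_mk]
    ring
  rw [Iright, jacksonI, hlow, hup, sub_zero, sum_congr rfl hterm, ← mul_sum,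
    mul_comm _ (sampleSeries _ _ _ _),
    coeff_mul, Nat.sum_antidiagonal_eq_sum_range_succ (fun i j =>
      coeff i (sampleSeries q b γ g) * coeff j (qBinomialSeries q (q ^ γ)))]
  have hPγ := (pochInf_pos hq0.le hq1 (Real.rpow_lt_one hq0.le hq1 hγ)).ne'
  have hPq := (pochInf_pos hq0.le hq1 hq1).ne'
  have hconst :
      (qGamma q γ)⁻¹ * ((1 - q) * b) * b ^ (γ - 1) * (pochInf q q / pochInf q (q ^ γ)) =
      ((1 - q) * b) ^ γ := by
    rw [mul_assoc _ ((1 - q) * b), qGamma_inv_mul_eq hq1 hb]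
    field_simp
  rw [← hconst, Nat.succ_eq_add_one]
  ring

lemma Iright_zero (hq0 : 0 < q) (hq1 : q < 1) {b : ℝ} (hb : 0 < b) (γ : ℝ) (g : ℝ → ℝ) :
    Iright q b γ g 0 = ((1 - q) * b) ^ γ * (pochInf q (q ^ γ) / pochInf q q) *
      ∑' n, coeff n (sampleSeries q b γ g) := by
  have hterm (n : ℕ) : q ^ n * ((b * q ^ n) ^ (γ - 1) * poch q (0 / (b * q ^ n)) (γ - 1) *
      g (b * q ^ n)) = b ^ (γ - 1) * coeff n (sampleSeries q b γ g) := by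
    rw [zero_div, poch, zero_mul, pochInf_zero, div_one, sampleSeries, coeff_mk,
      ← mul_assoc, ← mul_assoc, pow_mul_mul_pow_rpow_sub_one hq0 hb]
    ring
  simp only [Iright, jacksonI, jackson, mul_zero, zero_mul, sub_zero]
  rw [tsum_congr hterm, tsum_mul_left, ← qGamma_inv_mul_eq hq1 hb]
  ring

lemma sampleSeries_Iright (hq0 : 0 < q) (hq1 : q < 1) {b : ℝ} (hb : 0 < b) (α : ℝ) {β : ℝ}
    (hβ : 0 < β) (f : ℝ → ℝ) :
    sampleSeries q b α (Iright q b β f) = C (((1 - q) * b) ^ β) *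
      (rescale (q ^ α) (qBinomialSeries q (q ^ β)) * sampleSeries q b (α + β) f) := by
  ext n
  rw [← rescale_sampleSeries hq0, ← map_mul, coeff_C_mul, coeff_rescale, sampleSeries, coeff_mk,
    Iright_grid hq0 hq1 hb hβ]
  ring

theorem Iright_Iright_grid (hq0 : 0 < q) (hq1 : q < 1) {b : ℝ} (hb : 0 < b) {α β : ℝ}
    (hα : 0 < α) (hβ : 0 < β) (f : ℝ → ℝ) (m : ℕ) :
    Iright q b α (Iright q b β f) (b * q ^ m) = Iright q b (α + β) f (b * q ^ m) := by
  rw [Iright_grid hq0 hq1 hb hα, sampleSeries_Iright hq0 hq1 hb α hβ,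
    Iright_grid hq0 hq1 hb (add_pos hα hβ), mul_left_comm (qBinomialSeries q (q ^ α)),
    coeff_C_mul, ← mul_assoc (qBinomialSeries q (q ^ α)),
    qBinomialSeries_mul_rescale hq0.le hq1, ← Real.rpow_add hq0,
    Real.rpow_add (mul_pos (sub_pos.2 hq1) hb)]
  ring

theorem Iright_Iright_zero (hq0 : 0 < q) (hq1 : q < 1) {b : ℝ} (hb : 0 < b) {α β : ℝ}
    (hα : 0 < α) (hβ : 0 < β) (f : ℝ → ℝ) :
    Iright q b α (Iright q b β f) 0 = Iright q b (α + β) f 0 := by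
  have hqα : |q ^ α| < 1 := by
    rw [abs_of_pos (Real.rpow_pos_of_pos hq0 α)]
    exact Real.rpow_lt_one hq0.le hq1 hα
  have hqαβ : |q ^ α * q ^ β| < 1 := by
    rw [← Real.rpow_add hq0, abs_of_pos (Real.rpow_pos_of_pos hq0 _)]
    exact Real.rpow_lt_one hq0.le hq1 (add_pos hα hβ)
  have hCauchy := PowerSeries.tsum_coeff_mul_of_mul_eq_one
    (summable_norm_coeff_rescale_qBinomialSeries hq0.le hq1 hqα (q ^ β))
    (summable_norm_coeff_rescale_qBinomialSeries hq0.le hq1 hqαβ (q ^ β)⁻¹)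
    (rescale_qBinomialSeries_inv_mul hq0.le hq1 (q ^ α) (Real.rpow_pos_of_pos hq0 β).ne')
  rw [Iright_zero hq0 hq1 hb, sampleSeries_Iright hq0 hq1 hb α hβ, Iright_zero hq0 hq1 hb]
  simp only [coeff_C_mul]
  rw [tsum_mul_left, hCauchy, tsum_coeff_rescale_qBinomialSeries hq0.le hq1 hqα,
    ← Real.rpow_add hq0, Real.rpow_add (mul_pos (sub_pos.2 hq1) hb)]
  have hPα := (pochInf_pos hq0.le hq1 (Real.rpow_lt_one hq0.le hq1 hα)).ne'
  have hPq := (pochInf_pos hq0.le hq1 hq1).ne'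
  field_simp

end QFrac

/-- semigroup property of the right-sided Riemann–Liouville
q-fractional integral on `A^*_{q,b}`. -/
theorem stmt2 (q b α β : ℝ) (hq : 0 < q) (hq1 : q < 1) (hb : 0 < b)
    (hα : 0 < α) (hβ : 0 < β) (f : ℝ → ℝ) (x : ℝ)
    (hx : x = 0 ∨ ∃ n : ℕ, x = b * q ^ n) :
    QFrac.Iright q b α (QFrac.Iright q b β f) x = QFrac.Iright q b (α + β) f x := by
  rcases hx with rfl | ⟨n, rfl⟩
  · exact QFrac.Iright_Iright_zero hq hq1 hb hα hβ f
  · exact QFrac.Iright_Iright_grid hq hq1 hb hα hβ f n
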